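/- arXiv:math/0504531 — 2 statements merged into one kernel-verified Lean document; each statement's English description precedes it below -/
import Mathlib

section
/- In the shuffle algebra (K{X}_ω, ⧢) dual to the free Mag_ω-Hopf algebra, the product of n distinct variables satisfies x_1 ⧢ x_2 ⧢ ⋯ ⧢ x_n = ∑_{T} ∑_{σ ∈ Σ_n} T^σ, where T ranges over unlabeled planar reduced trees with n leaves and T^σ is T with its i-th leaf labeled x_{σ(i)}. -/
noncomputable section

/-- A planar reduced rooted tree with leaves labeled by `X` and all vertex arities
at most `N` (and at least 2): the tree monomials of the free `Mag_N`-algebra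
(`N = ⊤` gives the operad `Mag_ω` of Stasheff polytopes, `N = 2` gives `Mag`). -/
inductive PT (X : Type) (N : ℕ∞) : Type
  | leaf : X → PT X N
  | node : (k : ℕ) → 2 ≤ k → (k : ℕ∞) ≤ N → (Fin k → PT X N) → PT X N

namespace PT

variable {X : Type} {N : ℕ∞}

/-- Number of leaves. -/
def nLeaves : PT X N → ℕ
  | .leaf _ => 1
  | .node k _ _ f => ∑ i : Fin k, nLeaves (f i)

/-- The list of leaf labels, from left to right. -/
def leafList : PT X N → List X
  | .leaf x => [x]
  | .node k _ _ f => ((List.finRange k).map fun i => leafList (f i)).flatten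

end PT

/-- The monomial basis of the free unitary `Mag_N`-algebra: tree monomials together
with the empty tree `none` (the unit `1`). -/
abbrev OT (X : Type) (N : ℕ∞) := Option (PT X N)

/-- The free unitary `Mag_N`-algebra `K{X}_N` on the monomial basis `OT X N`;
via this basis it is identified with its graded dual. -/
abbrev FA (K X : Type) (N : ℕ∞) [Semiring K] := OT X N →₀ K

/-- Grafting of a list of monomials (with the coherent unit action): unit factors are
discarded, the empty grafting is the unit, grafting a single tree is that tree
(contraction of a unary vertex), and otherwise a new root is introduced. -/
def graftB {X : Type} {N : ℕ∞} (l : List (OT X N)) : OT X N :=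
  match l.reduceOption with
  | [] => none
  | [t] => some t
  | l' => if h : 2 ≤ l'.length ∧ (l'.length : ℕ∞) ≤ N then
      some (.node l'.length h.1 h.2 l'.get) else none

/-- Degree (leaf count) of a basis monomial; the unit has degree 0. -/
def degOT {X : Type} {N : ℕ∞} : OT X N → ℕ
  | none => 0
  | some t => t.nLeaves

/-- Multilinear extension helper: `tup [f₁,…,fₙ]` is the element `f₁ ⊗ ⋯ ⊗ fₙ` on the
basis of lists. -/
def tup {K : Type} [Semiring K] {α : Type} : List (α →₀ K) → (List α →₀ K)
  | [] => Finsupp.single [] 1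
  | g :: r => g.sum fun s c => c • (tup r).mapDomain (List.cons s)

/-- The `n`-ary grafting operation `∨ⁿ` of `K{X}_N`, as a multilinear map. -/
def G {K X : Type} {N : ℕ∞} [Semiring K] (l : List (FA K X N)) : FA K X N :=
  (tup l).mapDomain graftB

/-- Componentwise grafting on pairs of monomials. -/
def graftB2 {X : Type} {N : ℕ∞} (l : List (OT X N × OT X N)) : OT X N × OT X N :=
  (graftB (l.map Prod.fst), graftB (l.map Prod.snd))

/-- The `n`-ary grafting operation on `K{X}_N ⊗ K{X}_N` (componentwise product;
`single (s, t)` corresponds to `s ⊗ t`). -/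
def G2 {K X : Type} {N : ℕ∞} [Semiring K] (l : List ((OT X N × OT X N) →₀ K)) :
    (OT X N × OT X N) →₀ K :=
  (tup l).mapDomain graftB2

/-- `red T I`: restriction of the tree `T` to the leaf subset `I` (leaves are numbered
from `0` from the left): vertices and edges not on a path from a leaf in `I` to the
root are deleted and unary vertices are contracted; the unit if nothing survives. -/
def red {X : Type} {N : ℕ∞} : PT X N → Finset ℕ → OT X N
  | .leaf x, I => if 0 ∈ I then some (.leaf x) else none
  | .node k _ _ f, I =>
      graftB ((List.finRange k).map fun i =>
        let off : ℕ := ∑ j ∈ Finset.univ.filter (fun j : Fin k => j < i), (f j).nLeaves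
        red (f i) (((I.filter fun m => off ≤ m ∧ m < off + (f i).nLeaves)).image
          (· - off)))

/-- `f` is primitive: `Δ(f) = f ⊗ 1 + 1 ⊗ f`. -/
def IsPrim {K X : Type} {N : ℕ∞} [Semiring K]
    (Δ : FA K X N →ₗ[K] ((OT X N × OT X N) →₀ K)) (f : FA K X N) : Prop :=
  Δ f = f.mapDomain (fun a => (a, (none : OT X N))) +
    f.mapDomain (fun a => ((none : OT X N), a))

/-- `f` is homogeneous of degree `n` (each monomial in its support has `n` leaves). -/
def Homog {K X : Type} {N : ℕ∞} [Semiring K] (f : FA K X N) (n : ℕ) : Prop :=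
  ∀ t ∈ f.support, degOT t = n

/-- The canonical pairing on `K{X}_N` making the monomial basis orthonormal. -/
def pairF {K X : Type} {N : ℕ∞} [Semiring K] (f g : FA K X N) : K :=
  f.sum fun t c => c * g t

/-!
Reading off the leaf word of a tree monomial turns `Δ_a` into the unshuffle coproduct of the
tensor algebra: `Δ_a` is multiplicative for grafting, the leaf word of a grafting is the
concatenation of the leaf words, and the unshuffle coproduct is multiplicative for
concatenation. Hence `f ⧢ g` is computed on leaf words whenever `f` and `g` only depend on
leaf words, and `x_a ⧢ φ` evaluated at `t` sums `φ` over the words obtained from the leaf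
word of `t` by deleting one occurrence of `a`. By induction on `n`, `x_0 ⧢ ⋯ ⧢ x_{n-1}` is
the indicator function of the trees whose leaf word is a permutation of `(0, …, n-1)`.
-/

section Unshuffle

open Finsupp

variable (K : Type) [Semiring K] {α : Type}

def unshuffle : List α → (List α × List α) →₀ K
  | [] => single ([], []) 1
  | x :: w => (unshuffle w).mapDomain (Prod.map (x :: ·) id) +
      (unshuffle w).mapDomain (Prod.map id (x :: ·))

variable {K}

lemma linearCombination_unshuffle_nil (F : List α × List α → K) :
    linearCombination K F (unshuffle K []) = F ([], []) := by
  simp [unshuffle]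

lemma linearCombination_unshuffle_cons (x : α) (w : List α) (F : List α × List α → K) :
    linearCombination K F (unshuffle K (x :: w)) =
      linearCombination K (F ∘ Prod.map (x :: ·) id) (unshuffle K w) +
        linearCombination K (F ∘ Prod.map id (x :: ·)) (unshuffle K w) := by
  simp [unshuffle, linearCombination_mapDomain]

lemma linearCombination_unshuffle_append (u v : List α) (F : List α × List α → K) :
    linearCombination K F (unshuffle K (u ++ v)) =
      linearCombination K (fun p => linearCombination K
        (fun q => F (p.1 ++ q.1, p.2 ++ q.2)) (unshuffle K v)) (unshuffle K u) := by
  induction u generalizing F with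
  | nil => simp [linearCombination_unshuffle_nil]
  | cons x u ih =>
    simp only [List.cons_append, linearCombination_unshuffle_cons, ih]
    rfl

lemma linearCombination_unshuffle_ite_nil (w : List α) (χ : List α → K) :
    linearCombination K (fun p => if p.1 = [] then χ p.2 else 0) (unshuffle K w) = χ w := by
  induction w generalizing χ with
  | nil => simp [linearCombination_unshuffle_nil]
  | cons x w ih =>
    have hzero : (fun _ : List α × List α => (0 : K)) = 0 := rfl
    rw [linearCombination_unshuffle_cons]
    simp [Function.comp_def, ih (fun v => χ (x :: v)), hzero]

lemma linearCombination_unshuffle_ite_singleton [DecidableEq α] (a : α) (w : List α)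
    (χ : List α → K) :
    linearCombination K (fun p => if p.1 = [a] then χ p.2 else 0) (unshuffle K w) =
      ∑ i : Fin w.length, if w[i] = a then χ (w.eraseIdx i) else 0 := by
  induction w generalizing χ with
  | nil => simp [linearCombination_unshuffle_nil]
  | cons x w ih =>
    refine (linearCombination_unshuffle_cons _ _ _).trans ?_
    refine Eq.trans ?_ (Fin.sum_univ_succ (n := w.length) _).symm
    have hzero : (fun _ : List α × List α => (0 : K)) = 0 := rfl
    by_cases hx : x = a
    · subst hx
      simp [Function.comp_def, ih (fun v => χ (x :: v)), linearCombination_unshuffle_ite_nil]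
    · simp [Function.comp_def, hx, ih (fun v => χ (x :: v)), hzero]

end Unshuffle

lemma sum_ite_perm_eraseIdx {K : Type} [Semiring K] {α : Type} [DecidableEq α] {a : α}
    {L : List α} (hL : (a :: L).Nodup) (w : List α) :
    (∑ i : Fin w.length, if w[i] = a then (if (w.eraseIdx i).Perm L then 1 else 0) else 0 : K) =
      if w.Perm (a :: L) then 1 else 0 := by
  have perm_iff (i : Fin w.length) (hi : w[i] = a) : w.Perm (a :: L) ↔ (w.eraseIdx i).Perm L := by
    rw [← (List.getElem_cons_eraseIdx_perm i.2).congr_left, ← Fin.getElem_fin, hi,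
      List.perm_cons]
  by_cases hw : w.Perm (a :: L)
  · obtain ⟨i₀, hi₀, hw₀⟩ := List.getElem_of_mem (hw.mem_iff.mpr List.mem_cons_self)
    have hnodup : w.Nodup := hw.nodup_iff.mpr hL
    rw [if_pos hw, Finset.sum_eq_single ⟨i₀, hi₀⟩]
    · simp [hw₀, ← perm_iff ⟨i₀, hi₀⟩ hw₀, hw]
    · intro i _ hne
      rw [if_neg]
      intro hi
      exact hne (Fin.ext (hnodup.getElem_inj_iff.mp (hi.trans hw₀.symm)))
    · simp
  · rw [if_neg hw]
    refine Finset.sum_eq_zero fun i _ => ?_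
    split_ifs with hi hperm
    · exact absurd ((perm_iff i hi).mpr hperm) hw
    all_goals rfl

section Tup

open Finsupp

variable {K : Type} [Semiring K]

lemma linearCombination_tup_cons {β : Type} (D : β →₀ K) (Ds : List (β →₀ K))
    (H : List β → K) :
    linearCombination K H (tup (D :: Ds)) =
      linearCombination K (fun b => linearCombination K (fun l => H (b :: l)) (tup Ds)) D := by
  rw [tup, map_finsuppSum, linearCombination_apply]
  simp [linearCombination_mapDomain, Function.comp_def]

lemma linearCombination_tup_eq_unshuffle {α β : Type} (φ : β → List α × List α)
    {Ds : List (β →₀ K)} {ws : List (List α)}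
    (h : List.Forall₂ (fun D w => ∀ F : List α × List α → K,
      linearCombination K (F ∘ φ) D = linearCombination K F (unshuffle K w)) Ds ws)
    (F : List α × List α → K) :
    linearCombination K (fun l => F ((l.map fun b => (φ b).1).flatten,
        (l.map fun b => (φ b).2).flatten)) (tup Ds) =
      linearCombination K F (unshuffle K ws.flatten) := by
  induction h generalizing F with
  | nil => simp [tup, linearCombination_unshuffle_nil]
  | cons hD _ ih =>
    rw [linearCombination_tup_cons, List.flatten_cons, linearCombination_unshuffle_append, ← hD]
    simp only [List.map_cons, List.flatten_cons]
    congr 2 with b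
    exact ih fun q => F ((φ b).1 ++ q.1, (φ b).2 ++ q.2)

end Tup

section Trees

variable {X : Type}

def leafWord {N : ℕ∞} : OT X N → List X
  | none => []
  | some t => t.leafList

lemma PT.leafList_ne_nil {N : ℕ∞} : ∀ t : PT X N, t.leafList ≠ []
  | .leaf _ => List.cons_ne_nil _ _
  | .node k h2 _ f => by
    simpa [PT.leafList] using ⟨⟨0, by omega⟩, PT.leafList_ne_nil (f ⟨0, by omega⟩)⟩

lemma PT.leafList_eq_singleton_iff {N : ℕ∞} (t : PT X N) (a : X) :
    t.leafList = [a] ↔ t = .leaf a := by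
  cases t with
  | leaf x => simp [PT.leafList]
  | node k h2 hN f =>
    refine iff_of_false (fun h => ?_) (by simp)
    have hlen := congrArg List.length h
    simp only [PT.leafList, List.length_flatten, List.map_map, Function.comp_def,
      ← Fin.sum_univ_def, List.length_singleton] at hlen
    have hk : k ≤ ∑ i : Fin k, (f i).leafList.length := by
      calc k = ∑ _i : Fin k, 1 := by simp
        _ ≤ _ := Finset.sum_le_sum fun i _ => List.length_pos_iff.mpr (PT.leafList_ne_nil _)
    omega

lemma leafWord_eq_nil_iff {N : ℕ∞} (t : OT X N) : leafWord t = [] ↔ t = none := by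
  cases t with
  | none => simp [leafWord]
  | some t => simpa [leafWord] using t.leafList_ne_nil

lemma leafWord_eq_singleton_iff {N : ℕ∞} (t : OT X N) (a : X) :
    leafWord t = [a] ↔ t = some (.leaf a) := by
  cases t with
  | none => simp [leafWord]
  | some t => simpa [leafWord] using t.leafList_eq_singleton_iff a

lemma leafWord_graftB (l : List (OT X ⊤)) : leafWord (graftB l) = (l.map leafWord).flatten := by
  have hflat : (l.map leafWord).flatten = (l.reduceOption.map PT.leafList).flatten := by
    induction l with
    | nil => rfl
    | cons o l ih =>
      cases o <;> simp [leafWord, ih, List.reduceOption_cons_of_none,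
        List.reduceOption_cons_of_some]
  rw [hflat, graftB]
  split
  next heq => simp [leafWord, heq]
  next heq => simp [leafWord, heq]
  next hnil hsingle =>
    generalize l.reduceOption = l' at *
    have hlen : 2 ≤ l'.length := by
      rcases l' with _ | ⟨a, _ | ⟨b, r⟩⟩
      · exact (hnil rfl).elim
      · exact (hsingle a rfl).elim
      · simp
    rw [dif_pos ⟨hlen, le_top⟩]
    simp only [leafWord, PT.leafList]
    rw [show (fun i => (l'.get i).leafList) = PT.leafList ∘ l'.get from rfl, ← List.map_map,
      List.map_get_finRange]

lemma graftB_map_some (ts : List (PT X ⊤)) (h : 2 ≤ ts.length) :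
    graftB (ts.map some) = some (.node ts.length h le_top ts.get) := by
  obtain ⟨a, b, r, rfl⟩ : ∃ a b r, ts = a :: b :: r := by
    match ts, h with
    | a :: b :: r, _ => exact ⟨a, b, r, rfl⟩
  have : (List.map some r).reduceOption = r := by simp [List.reduceOption, List.filterMap_map]
  simp [graftB, this]

end Trees

section Grafting

variable {K X : Type} [Semiring K]

lemma tup_map_single (l : List X) :
    tup (l.map fun a => Finsupp.single a (1 : K)) = Finsupp.single l 1 := by
  induction l with
  | nil => rfl
  | cons a l ih =>
    simp only [List.map_cons, tup, ih]
    rw [Finsupp.sum_single_index (by simp), one_smul, Finsupp.mapDomain_single]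

lemma single_node_eq_G (k : ℕ) (h2 : 2 ≤ k) (hN : (k : ℕ∞) ≤ ⊤)
    (f : Fin k → PT X ⊤) :
    (Finsupp.single (some (.node k h2 hN f)) 1 : FA K X ⊤) =
      G ((List.finRange k).map fun i => Finsupp.single (some (f i)) 1) := by
  rw [G, show ((List.finRange k).map fun i => Finsupp.single (some (f i)) (1 : K)) =
      (((List.finRange k).map f).map some).map (Finsupp.single · 1) by simp [List.map_map],
    tup_map_single, Finsupp.mapDomain_single, graftB_map_some _ (by simpa using h2)]
  congr 2
  have hlen : ((List.finRange k).map f).length = k := by simp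
  congr 1
  · exact hlen.symm
  · exact proof_irrel_heq _ _
  · exact proof_irrel_heq _ _
  · rw [Fin.heq_fun_iff hlen.symm]
    simp

end Grafting

open Finsupp in
structure IsMagCoproduct {K X : Type} [Semiring K]
    (Δ : FA K X ⊤ →ₗ[K] ((OT X ⊤ × OT X ⊤) →₀ K)) : Prop where
  map_one : Δ (single none 1) = single (none, none) 1
  map_leaf : ∀ x : X, Δ (single (some (.leaf x)) 1) =
    single (some (.leaf x), none) 1 + single (none, some (.leaf x)) 1
  map_G : ∀ l : List (FA K X ⊤), 2 ≤ l.length → Δ (G l) = G2 (l.map (Δ ·))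

namespace IsMagCoproduct

open Finsupp

variable {K X : Type} [Semiring K] {Δ : FA K X ⊤ →ₗ[K] ((OT X ⊤ × OT X ⊤) →₀ K)}

theorem linearCombination_leafWord (hΔ : IsMagCoproduct Δ) (t : OT X ⊤)
    (F : List X × List X → K) :
    linearCombination K (F ∘ Prod.map leafWord leafWord) (Δ (single t 1)) =
      linearCombination K F (unshuffle K (leafWord t)) := by
  cases t with
  | none => simp [hΔ.map_one, leafWord, linearCombination_unshuffle_nil]
  | some T =>
    simp only [leafWord]
    induction T generalizing F with
    | leaf x =>
      simp [hΔ.map_leaf, leafWord, PT.leafList, linearCombination_unshuffle_cons,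
        linearCombination_unshuffle_nil]
    | node k h2 hN f ih =>
      have hgraft : (F ∘ Prod.map leafWord leafWord) ∘ graftB2 =
          fun l : List (OT X ⊤ × OT X ⊤) =>
            F ((l.map fun p => (Prod.map leafWord leafWord p).1).flatten,
              (l.map fun p => (Prod.map leafWord leafWord p).2).flatten) := by
        funext l
        simp [graftB2, leafWord_graftB, List.map_map, Function.comp_def]
      rw [single_node_eq_G, hΔ.map_G _ (by simpa), G2, linearCombination_mapDomain, hgraft,
        linearCombination_tup_eq_unshuffle (ws := (List.finRange k).map fun i => (f i).leafList)]
      · rfl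
      · simpa [List.forall₂_map_left_iff, List.forall₂_map_right_iff, List.forall₂_same]
          using ih

variable {sh : FA K X ⊤ → FA K X ⊤ → FA K X ⊤}

theorem shuffle_apply_of_leafWord (hΔ : IsMagCoproduct Δ)
    (hsh : ∀ (f g : FA K X ⊤) (t : OT X ⊤),
      sh f g t = (Δ (single t 1)).sum fun p c => c * (f p.1 * g p.2))
    {f g : FA K X ⊤} {χ₁ χ₂ : List X → K} (hf : ∀ s, f s = χ₁ (leafWord s))
    (hg : ∀ s, g s = χ₂ (leafWord s)) (t : OT X ⊤) :
    sh f g t = linearCombination K (fun p => χ₁ p.1 * χ₂ p.2) (unshuffle K (leafWord t)) := by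
  rw [hsh, ← hΔ.linearCombination_leafWord, linearCombination_apply]
  simp [hf, hg]

theorem foldr_shuffle_apply [DecidableEq X] (hΔ : IsMagCoproduct Δ)
    (hsh : ∀ (f g : FA K X ⊤) (t : OT X ⊤),
      sh f g t = (Δ (single t 1)).sum fun p c => c * (f p.1 * g p.2))
    {L : List X} (hL : L.Nodup) (t : OT X ⊤) :
    (L.map fun i => (single (some (.leaf i)) 1 : FA K X ⊤)).foldr sh (single none 1) t =
      if (leafWord t).Perm L then 1 else 0 := by
  induction L generalizing t with
  | nil => cases t <;> simp [leafWord, PT.leafList_ne_nil]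
  | cons a L ih =>
    rw [List.map_cons, List.foldr_cons, hΔ.shuffle_apply_of_leafWord hsh
      (χ₁ := fun w => if w = [a] then 1 else 0) (χ₂ := fun w => if w.Perm L then 1 else 0)
      (fun s => ?_) (ih hL.of_cons)]
    · simp only [ite_mul, one_mul, zero_mul]
      exact (linearCombination_unshuffle_ite_singleton a _ fun w => if w.Perm L then 1 else 0).trans
        (sum_ite_perm_eraseIdx hL _)
    · classical
      rw [single_apply]
      exact if_congr (by rw [eq_comm, leafWord_eq_singleton_iff]) rfl rfl

end IsMagCoproduct

theorem stmt13_general (K : Type) [Field K]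
    (Δ : FA K ℕ ⊤ →ₗ[K] ((OT ℕ ⊤ × OT ℕ ⊤) →₀ K))
    (hΔ1 : Δ (Finsupp.single (none : OT ℕ ⊤) 1) =
      Finsupp.single ((none : OT ℕ ⊤), (none : OT ℕ ⊤)) 1)
    (hΔx : ∀ x : ℕ, Δ (Finsupp.single (some (PT.leaf x)) 1) =
      Finsupp.single ((some (PT.leaf x) : OT ℕ ⊤), (none : OT ℕ ⊤)) 1 +
        Finsupp.single ((none : OT ℕ ⊤), (some (PT.leaf x) : OT ℕ ⊤)) 1)
    (hΔm : ∀ l : List (FA K ℕ ⊤), 2 ≤ l.length → Δ (G l) = G2 (l.map (Δ ·)))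
    (sh : FA K ℕ ⊤ → FA K ℕ ⊤ → FA K ℕ ⊤)
    (hsh : ∀ (f g : FA K ℕ ⊤) (t : OT ℕ ⊤),
      sh f g t = (Δ (Finsupp.single t 1)).sum fun p c => c * (f p.1 * g p.2))
    (n : ℕ) (hn : 1 ≤ n) :
    (∀ t : PT ℕ ⊤,
      (((List.range n).map fun i =>
          (Finsupp.single (some (PT.leaf i) : OT ℕ ⊤) 1 : FA K ℕ ⊤)).foldr sh
        (Finsupp.single (none : OT ℕ ⊤) 1)) (some t) =
        if (PT.leafList t).Perm (List.range n) then 1 else 0) ∧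
    (((List.range n).map fun i =>
        (Finsupp.single (some (PT.leaf i) : OT ℕ ⊤) 1 : FA K ℕ ⊤)).foldr sh
      (Finsupp.single (none : OT ℕ ⊤) 1)) none = 0 := by
  have hΔ : IsMagCoproduct Δ := ⟨hΔ1, hΔx, hΔm⟩
  have hfoldr := hΔ.foldr_shuffle_apply hsh (List.nodup_range (n := n))
  refine ⟨fun t => hfoldr (some t), ?_⟩
  rw [hfoldr none, if_neg]
  simpa [leafWord] using Nat.one_le_iff_ne_zero.mp hn

/-- In the shuffle algebra `(K{X}_ω, ⧢)` dual to the free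
`Mag_ω`-Hopf algebra (`X = ℕ`, variables `x_i = i`), the product of `n` distinct
variables is `x_0 ⧢ x_1 ⧢ ⋯ ⧢ x_{n-1} = ∑_T ∑_{σ ∈ Σ_n} T^σ`, summing over unlabeled
planar reduced trees `T` with `n` leaves and all leaf-labelings by the `n` variables:
equivalently, the coefficient of a tree monomial `t` in this product is `1` if the
leaf list of `t` is a permutation of `(x_0, …, x_{n-1})` and `0` otherwise. -/
theorem stmt13 (K : Type) [Field K] [CharZero K]
    (Δ : FA K ℕ ⊤ →ₗ[K] ((OT ℕ ⊤ × OT ℕ ⊤) →₀ K))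
    (hΔ1 : Δ (Finsupp.single (none : OT ℕ ⊤) 1) =
      Finsupp.single ((none : OT ℕ ⊤), (none : OT ℕ ⊤)) 1)
    (hΔx : ∀ x : ℕ, Δ (Finsupp.single (some (PT.leaf x)) 1) =
      Finsupp.single ((some (PT.leaf x) : OT ℕ ⊤), (none : OT ℕ ⊤)) 1 +
        Finsupp.single ((none : OT ℕ ⊤), (some (PT.leaf x) : OT ℕ ⊤)) 1)
    (hΔm : ∀ l : List (FA K ℕ ⊤), 2 ≤ l.length → Δ (G l) = G2 (l.map (Δ ·)))
    (sh : FA K ℕ ⊤ → FA K ℕ ⊤ → FA K ℕ ⊤)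
    (hsh : ∀ (f g : FA K ℕ ⊤) (t : OT ℕ ⊤),
      sh f g t = (Δ (Finsupp.single t 1)).sum fun p c => c * (f p.1 * g p.2))
    (n : ℕ) (hn : 1 ≤ n) :
    (∀ t : PT ℕ ⊤,
      (((List.range n).map fun i =>
          (Finsupp.single (some (PT.leaf i) : OT ℕ ⊤) 1 : FA K ℕ ⊤)).foldr sh
        (Finsupp.single (none : OT ℕ ⊤) 1)) (some t) =
        if (PT.leafList t).Perm (List.range n) then 1 else 0) ∧
    (((List.range n).map fun i =>
        (Finsupp.single (some (PT.leaf i) : OT ℕ ⊤) 1 : FA K ℕ ⊤)).foldr sh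
      (Finsupp.single (none : OT ℕ ⊤) 1)) none = 0 :=
  stmt13_general K Δ hΔ1 hΔx hΔm sh hsh n hn

end
end

section
/- The map ∇₂ : (K{X}_N, ⧢) → (K{X}_N, ⧢) ⊗ (K{X}_N, ⧢) dual to the binary grafting operation ∨² is a morphism of commutative algebras, satisfies ∇₂(T) = T⊗1 + 1⊗T + T¹⊗T² if T = ∨²(T¹.T²) and ∇₂(T) = T⊗1 + 1⊗T if the root of T has arity ≠ 2, and is not coassociative; thus (K{X}_N, ⧢, ∇₂) is a co-magma object in unital commutative algebras. -/
noncomputable section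

/-- `f ⊗ g` as an element of the tensor square (on the basis of pairs). -/
def tens {K X : Type} {N : ℕ∞} [Semiring K] (f g : FA K X N) :
    (OT X N × OT X N) →₀ K :=
  f.sum fun s c => c • g.mapDomain (Prod.mk s)

/-- The canonical pairing on the tensor square. -/
def pair2 {K X : Type} {N : ℕ∞} [Semiring K] (u v : (OT X N × OT X N) →₀ K) : K :=
  u.sum fun p c => c * v p

/-- The shuffle product `⧢ ⊗ ⧢` on the tensor square, induced componentwise by a
shuffle product `sh` on `K{X}_N`. -/
def sh2 {K X : Type} {N : ℕ∞} [Semiring K] (sh : FA K X N → FA K X N → FA K X N)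
    (u v : (OT X N × OT X N) →₀ K) : (OT X N × OT X N) →₀ K :=
  u.sum fun p c => v.sum fun q d =>
    (c * d) • tens (sh (Finsupp.single p.1 1) (Finsupp.single q.1 1))
      (sh (Finsupp.single p.2 1) (Finsupp.single q.2 1))

/-- `∇₂ ⊗ id` on the tensor square. -/
def nablaTensorId {K X : Type} {N : ℕ∞} [Semiring K]
    (nab : FA K X N →ₗ[K] ((OT X N × OT X N) →₀ K))
    (u : (OT X N × OT X N) →₀ K) : (OT X N × OT X N × OT X N) →₀ K :=
  u.sum fun p c => c • (nab (Finsupp.single p.1 1)).mapDomain fun q => (q.1, q.2, p.2)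

/-- `id ⊗ ∇₂` on the tensor square. -/
def idTensorNabla {K X : Type} {N : ℕ∞} [Semiring K]
    (nab : FA K X N →ₗ[K] ((OT X N × OT X N) →₀ K))
    (u : (OT X N × OT X N) →₀ K) : (OT X N × OT X N × OT X N) →₀ K :=
  u.sum fun p c => c • (nab (Finsupp.single p.2 1)).mapDomain fun q => (p.1, q.1, q.2)

/-!
Pairing `∨²` against basis monomials shows `∇₂ g (u ⊗ v) = g (∨²(u.v))`: the coefficient of
`u ⊗ v` in `∇₂ T` is `1` exactly when `T` is the grafting of `u` and `v`, and the unit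
conventions of grafting (`∨²(T.1) = ∨²(1.T) = T`) give the formulas on monomials.
Multiplicativity is the dual of `Δ` being a morphism for `∨²`: both sides become the pairing of
`Δ u ⊗ Δ v` with `∇₂ f ⊗ ∇₂ g` up to the exchange of the two middle tensor factors.
Coassociativity fails because `∨²` is not associative: `(x x) x ≠ x (x x)`.
-/

section Grafting

variable {X : Type} {N : ℕ∞}

@[simp] lemma graftB_none_none : graftB ([none, none] : List (OT X N)) = none := rfl

@[simp] lemma graftB_some_none (a : PT X N) : graftB [some a, none] = some a := rfl

@[simp] lemma graftB_none_some (a : PT X N) : graftB [none, some a] = some a := rfl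

lemma graftB_some_some (a b : PT X N) :
    graftB [some a, some b] =
      if h : ((2 : ℕ) : ℕ∞) ≤ N then some (.node 2 le_rfl h ![a, b]) else none := by
  have hget : ([a, b] : List (PT X N)).get = ![a, b] := by
    ext i; fin_cases i <;> rfl
  simp only [graftB, List.reduceOption_cons_of_some, List.reduceOption_nil, List.length_cons,
    List.length_nil, hget]
  split_ifs with h₁ h₂ h₂
  · rfl
  · exact absurd h₁.2 h₂
  · exact absurd ⟨le_rfl, h₂⟩ h₁
  · rfl

lemma graftB_some_some_of_le (h : ((2 : ℕ) : ℕ∞) ≤ N) (a b : PT X N) :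
    graftB [some a, some b] = some (.node 2 le_rfl h ![a, b]) := by
  rw [graftB_some_some, dif_pos h]

end Grafting

lemma Finsupp.mapDomain_apply_of_leftInverse {α β M : Type} [AddCommMonoid M] {f : α → β}
    {g : β → α} (hfg : Function.LeftInverse g f) (x : α →₀ M) (b : β) [Decidable (f (g b) = b)] :
    x.mapDomain f b = if f (g b) = b then x (g b) else 0 := by
  split_ifs with h
  · conv_lhs => rw [← h]
    exact Finsupp.mapDomain_apply hfg.injective x (g b)
  · exact Finsupp.mapDomain_of_notMem_range _ _ fun ⟨a, ha⟩ => h (by rw [← ha, hfg])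

section Tensors

variable {K X : Type} [CommSemiring K] {N : ℕ∞}

lemma tup_pair {α : Type} (a b : α →₀ K) :
    tup [a, b] = a.sum fun s c => b.sum fun t d => Finsupp.single [s, t] (c * d) := by
  simp only [tup, Finsupp.mapDomain_single, Finsupp.smul_single, smul_eq_mul, mul_one]
  refine Finsupp.sum_congr fun s _ => ?_
  rw [← Finsupp.mapDomain.addMonoidHom_apply, map_finsuppSum, Finsupp.smul_sum]
  refine Finsupp.sum_congr fun t _ => ?_
  simp [Finsupp.mapDomain_single, Finsupp.smul_single]

lemma G_single_single (u v : OT X N) :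
    G (K := K) [Finsupp.single u 1, Finsupp.single v 1] = Finsupp.single (graftB [u, v]) 1 := by
  simp [G, tup_pair, Finsupp.mapDomain_single, -Finsupp.single_mul]

lemma G2_pair (m n : (OT X N × OT X N) →₀ K) :
    G2 [m, n] = m.sum fun s c => n.sum fun t d => Finsupp.single (graftB2 [s, t]) (c * d) := by
  simp only [G2, tup_pair, ← Finsupp.mapDomain.addMonoidHom_apply, map_finsuppSum]
  simp [Finsupp.mapDomain_single, -Finsupp.single_mul]

lemma pairF_single_left (a : OT X N) (g : FA K X N) : pairF (Finsupp.single a 1) g = g a := by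
  simp [pairF]

lemma pair2_single_left (p : OT X N × OT X N) (w : (OT X N × OT X N) →₀ K) :
    pair2 (Finsupp.single p 1) w = w p := by
  simp [pair2]

lemma tens_single_single (u v : OT X N) :
    tens (Finsupp.single u (1 : K)) (Finsupp.single v 1) = Finsupp.single (u, v) 1 := by
  simp [tens, Finsupp.mapDomain_single]

lemma tens_apply (f g : FA K X N) (u v : OT X N) : tens f g (u, v) = f u * g v := by
  classical
  have hmk (s : OT X N) : g.mapDomain (Prod.mk s) (u, v) = if s = u then g v else 0 := by
    simpa using Finsupp.mapDomain_apply_of_leftInverse (f := Prod.mk s) (g := Prod.snd)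
      (fun _ => rfl) g (u, v)
  simp +contextual [tens, Finsupp.sum_apply, hmk]

end Tensors

section Adjoint

variable {K X : Type} [CommSemiring K] {N : ℕ∞}

def IsGraftAdjoint (nab : FA K X N →ₗ[K] ((OT X N × OT X N) →₀ K)) : Prop :=
  ∀ f₁ f₂ g : FA K X N, pairF (G [f₁, f₂]) g = pair2 (tens f₁ f₂) (nab g)

variable {nab : FA K X N →ₗ[K] ((OT X N × OT X N) →₀ K)}

namespace IsGraftAdjoint

lemma apply (hnab : IsGraftAdjoint nab) (g : FA K X N) (u v : OT X N) :
    nab g (u, v) = g (graftB [u, v]) := by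
  simpa [G_single_single, pairF_single_left, tens_single_single, pair2_single_left] using
    (hnab (Finsupp.single u 1) (Finsupp.single v 1) g).symm

lemma map_single_none (hnab : IsGraftAdjoint nab) (hN : 2 ≤ N) :
    nab (Finsupp.single none 1) = Finsupp.single (none, none) 1 := by
  ext ⟨_ | a, _ | b⟩ <;> simp [hnab.apply, graftB_some_some_of_le (by exact_mod_cast hN)]

lemma map_single_leaf (hnab : IsGraftAdjoint nab) (x : X) :
    nab (Finsupp.single (some (.leaf x)) 1) =
      Finsupp.single (some (.leaf x), none) 1 + Finsupp.single (none, some (.leaf x)) 1 := by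
  classical
  ext ⟨_ | a, _ | b⟩ <;> simp [hnab.apply, graftB_some_some, Finsupp.single_apply, apply_dite]

lemma map_single_node_two (hnab : IsGraftAdjoint nab) (h : ((2 : ℕ) : ℕ∞) ≤ N)
    (f : Fin 2 → PT X N) :
    nab (Finsupp.single (some (.node 2 le_rfl h f)) 1) =
      Finsupp.single (some (.node 2 le_rfl h f), none) 1 +
        Finsupp.single (none, some (.node 2 le_rfl h f)) 1 +
          Finsupp.single (some (f 0), some (f 1)) 1 := by
  classical
  ext ⟨_ | a, _ | b⟩ <;>
    simp [hnab.apply, graftB_some_some_of_le h, Finsupp.single_apply, funext_iff,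
      Fin.forall_fin_two]

lemma map_single_node_of_ne_two (hnab : IsGraftAdjoint nab) (k : ℕ) (hk : 2 ≤ k)
    (h : (k : ℕ∞) ≤ N) (f : Fin k → PT X N) (hk2 : k ≠ 2) :
    nab (Finsupp.single (some (.node k hk h f)) 1) =
      Finsupp.single (some (.node k hk h f), none) 1 +
        Finsupp.single (none, some (.node k hk h f)) 1 := by
  classical
  ext ⟨_ | a, _ | b⟩ <;>
    simp [hnab.apply, graftB_some_some, Finsupp.single_apply, apply_dite, hk2]

end IsGraftAdjoint

end Adjoint

section ExchangePairing

variable {K A : Type} [CommSemiring K]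

/-- `⟨m ⊗ n, τ (α ⊗ β)⟩`, where `τ` swaps the two middle factors of `A^{⊗ 4}`. -/
def exchangePairing (m n α β : (A × A) →₀ K) : K :=
  m.sum fun s c => n.sum fun t d => c * d * (α (s.1, t.1) * β (s.2, t.2))

lemma exchangePairing_comm (m n α β : (A × A) →₀ K) :
    exchangePairing m n α β = exchangePairing α β m n := by
  let τ : (A × A) × (A × A) → (A × A) × (A × A) := fun x => ((x.1.1, x.2.1), (x.1.2, x.2.2))
  have hτ (x) : τ (τ x) = x := rfl
  have hsupp (m n α β : (A × A) →₀ K) (x : (A × A) × (A × A))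
      (hx : m x.1 * n x.2 * (α (τ x).1 * β (τ x).2) ≠ 0) :
      τ x ∈ α.support ×ˢ β.support := by
    simp only [Finset.mem_product, Finsupp.mem_support_iff]
    exact ⟨fun h => hx (by simp [h]), fun h => hx (by simp [h])⟩
  simp only [exchangePairing, Finsupp.sum, ← Finset.sum_product']
  refine Finset.sum_bij_ne_zero (fun x _ _ => τ x) (fun x _ hx => hsupp m n α β x hx)
    (fun x _ _ y _ _ h => by rw [← hτ x, h, hτ]) (fun y _ hy => ⟨τ y, ?_, ?_, hτ y⟩)
    (fun x _ _ => mul_comm _ _)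
  · exact hsupp α β m n y hy
  · rwa [mul_comm]

end ExchangePairing

section Shuffle

variable {K X : Type} [CommSemiring K] {N : ℕ∞}
  {Δ nab : FA K X N →ₗ[K] ((OT X N × OT X N) →₀ K)} {sh : FA K X N → FA K X N → FA K X N}

lemma sh_single_single_apply
    (hsh : ∀ (f g : FA K X N) (t : OT X N),
      sh f g t = (Δ (Finsupp.single t 1)).sum fun p c => c * (f p.1 * g p.2))
    (a b u : OT X N) :
    sh (Finsupp.single a 1) (Finsupp.single b 1) u = Δ (Finsupp.single u 1) (a, b) := by
  classical
  have hpick (p : OT X N × OT X N) :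
      Finsupp.single a (1 : K) p.1 * Finsupp.single b 1 p.2 = if p = (a, b) then 1 else 0 := by
    obtain ⟨p₁, p₂⟩ := p
    by_cases h₁ : p₁ = a <;> by_cases h₂ : p₂ = b <;> simp [h₁, h₂, Ne.symm]
  simp only [hsh, hpick, mul_ite, mul_one, mul_zero]
  exact Finsupp.sum_ite_self_eq' _ _

lemma IsGraftAdjoint.map_sh (hnab : IsGraftAdjoint nab) (hN : 2 ≤ N)
    (hΔm : ∀ l : List (FA K X N), 2 ≤ l.length → (l.length : ℕ∞) ≤ N →
      Δ (G l) = G2 (l.map (Δ ·)))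
    (hsh : ∀ (f g : FA K X N) (t : OT X N),
      sh f g t = (Δ (Finsupp.single t 1)).sum fun p c => c * (f p.1 * g p.2))
    (f g : FA K X N) :
    nab (sh f g) = sh2 sh (nab f) (nab g) := by
  ext ⟨u, v⟩
  have hΔ : Δ (Finsupp.single (graftB [u, v]) 1) =
      G2 [Δ (Finsupp.single u 1), Δ (Finsupp.single v 1)] := by
    simpa [G_single_single] using
      hΔm [Finsupp.single u 1, Finsupp.single v 1] le_rfl (by simpa using hN)
  calc nab (sh f g) (u, v) = sh f g (graftB [u, v]) := hnab.apply _ u v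
    _ = exchangePairing (Δ (Finsupp.single u 1)) (Δ (Finsupp.single v 1)) (nab f) (nab g) := by
      rw [hsh, hΔ, G2_pair]
      simp [Finsupp.sum_sum_index, add_mul, exchangePairing, hnab.apply, graftB2,
        -Finsupp.single_mul]
    _ = exchangePairing (nab f) (nab g) (Δ (Finsupp.single u 1)) (Δ (Finsupp.single v 1)) :=
      exchangePairing_comm _ _ _ _
    _ = sh2 sh (nab f) (nab g) (u, v) := by
      simp [sh2, exchangePairing, Finsupp.sum_apply, tens_apply, sh_single_single_apply hsh]

end Shuffle

section Coassociativity

variable {K X : Type} [CommSemiring K] {N : ℕ∞} {nab : FA K X N →ₗ[K] ((OT X N × OT X N) →₀ K)}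

namespace IsGraftAdjoint

lemma nablaTensorId_apply (hnab : IsGraftAdjoint nab) (w : (OT X N × OT X N) →₀ K)
    (a b c : OT X N) : nablaTensorId nab w (a, b, c) = w (graftB [a, b], c) := by
  classical
  have hmap (h : (OT X N × OT X N) →₀ K) (z : OT X N) :
      h.mapDomain (fun q => (q.1, q.2, z)) (a, b, c) = if z = c then h (a, b) else 0 := by
    simpa using Finsupp.mapDomain_apply_of_leftInverse (f := fun q => (q.1, q.2, z))
      (g := fun r => (r.1, r.2.1)) (fun _ => rfl) h (a, b, c)
  rw [← Finsupp.sum_ite_self_eq' w]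
  simp only [nablaTensorId, Finsupp.sum_apply, Finsupp.smul_apply, hmap, hnab.apply]
  refine Finsupp.sum_congr fun p _ => ?_
  split_ifs <;> simp_all [Prod.ext_iff, eq_comm]

lemma idTensorNabla_apply (hnab : IsGraftAdjoint nab) (w : (OT X N × OT X N) →₀ K)
    (a b c : OT X N) : idTensorNabla nab w (a, b, c) = w (a, graftB [b, c]) := by
  classical
  have hmap (h : (OT X N × OT X N) →₀ K) (z : OT X N) :
      h.mapDomain (fun q => (z, q.1, q.2)) (a, b, c) = if z = a then h (b, c) else 0 := by
    simpa using Finsupp.mapDomain_apply_of_leftInverse (f := fun q => (z, q.1, q.2))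
      (g := fun r => r.2) (fun _ => rfl) h (a, b, c)
  rw [← Finsupp.sum_ite_self_eq' w]
  simp only [idTensorNabla, Finsupp.sum_apply, Finsupp.smul_apply, hmap, hnab.apply]
  refine Finsupp.sum_congr fun p _ => ?_
  split_ifs <;> simp_all [Prod.ext_iff, eq_comm]

lemma not_coassoc [Nontrivial K] (hnab : IsGraftAdjoint nab) (hN : 2 ≤ N) (x : X) :
    ¬ ∀ f : FA K X N, nablaTensorId nab (nab f) = idTensorNabla nab (nab f) := by
  have h2 : ((2 : ℕ) : ℕ∞) ≤ N := by exact_mod_cast hN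
  intro hcoassoc
  -- at `x ⊗ x ⊗ x`, `∇₂ ⊗ id` sees the left comb `(x x) x` and `id ⊗ ∇₂` the right comb `x (x x)`
  have := congrArg (· (some (.leaf x), some (.leaf x), some (.leaf x))) <| hcoassoc <|
    Finsupp.single (some (.node 2 le_rfl h2 ![.node 2 le_rfl h2 ![.leaf x, .leaf x], .leaf x])) 1
  simp [hnab.nablaTensorId_apply, hnab.idTensorNabla_apply, hnab.apply,
    graftB_some_some_of_le h2] at this

end IsGraftAdjoint

end Coassociativity

theorem stmt15_general (K : Type) [Field K] (N : ℕ∞) (hN : 2 ≤ N)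
    (Δ : FA K ℕ N →ₗ[K] ((OT ℕ N × OT ℕ N) →₀ K))
    (hΔm : ∀ l : List (FA K ℕ N), 2 ≤ l.length → (l.length : ℕ∞) ≤ N →
      Δ (G l) = G2 (l.map (Δ ·)))
    (sh : FA K ℕ N → FA K ℕ N → FA K ℕ N)
    (hsh : ∀ (f g : FA K ℕ N) (t : OT ℕ N),
      sh f g t = (Δ (Finsupp.single t 1)).sum fun p c => c * (f p.1 * g p.2))
    (nab : FA K ℕ N →ₗ[K] ((OT ℕ N × OT ℕ N) →₀ K))
    (hnab : ∀ f₁ f₂ g : FA K ℕ N,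
      pairF (G [f₁, f₂]) g = pair2 (tens f₁ f₂) (nab g)) :
    (nab (Finsupp.single (none : OT ℕ N) 1) =
      Finsupp.single ((none : OT ℕ N), (none : OT ℕ N)) 1) ∧
    (∀ f g : FA K ℕ N, nab (sh f g) = sh2 sh (nab f) (nab g)) ∧
    (∀ (h : 2 ≤ 2) (h' : ((2 : ℕ) : ℕ∞) ≤ N) (f : Fin 2 → PT ℕ N),
      nab (Finsupp.single (some (PT.node 2 h h' f) : OT ℕ N) 1) =
        Finsupp.single ((some (PT.node 2 h h' f) : OT ℕ N), (none : OT ℕ N)) 1 +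
          Finsupp.single ((none : OT ℕ N), (some (PT.node 2 h h' f) : OT ℕ N)) 1 +
            Finsupp.single ((some (f 0) : OT ℕ N), (some (f 1) : OT ℕ N)) 1) ∧
    (∀ x : ℕ, nab (Finsupp.single (some (PT.leaf x) : OT ℕ N) 1) =
      Finsupp.single ((some (PT.leaf x) : OT ℕ N), (none : OT ℕ N)) 1 +
        Finsupp.single ((none : OT ℕ N), (some (PT.leaf x) : OT ℕ N)) 1) ∧
    (∀ (k : ℕ) (h : 2 ≤ k) (h' : (k : ℕ∞) ≤ N) (f : Fin k → PT ℕ N), k ≠ 2 →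
      nab (Finsupp.single (some (PT.node k h h' f) : OT ℕ N) 1) =
        Finsupp.single ((some (PT.node k h h' f) : OT ℕ N), (none : OT ℕ N)) 1 +
          Finsupp.single ((none : OT ℕ N), (some (PT.node k h h' f) : OT ℕ N)) 1) ∧
    ¬ (∀ f : FA K ℕ N, nablaTensorId nab (nab f) = idTensorNabla nab (nab f)) := by
  have hadj : IsGraftAdjoint nab := hnab
  exact ⟨hadj.map_single_none hN, hadj.map_sh hN hΔm hsh,
    fun _ h' f => hadj.map_single_node_two h' f, hadj.map_single_leaf,
    hadj.map_single_node_of_ne_two, hadj.not_coassoc hN 0⟩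

/-- For the free unitary `Mag_N`-algebra `K{X}_N` (`2 ≤ N ≤ ω`,
`X = {x_0, x_1, …}`) with dual shuffle product `⧢`, the map `∇₂` dual to the binary
grafting `∨²` (i.e. `⟨∨²(f₁.f₂), g⟩ = ⟨f₁ ⊗ f₂, ∇₂(g)⟩`) is a morphism of unital
commutative algebras `(K{X}_N, ⧢) → (K{X}_N, ⧢)⊗(K{X}_N, ⧢)`; on tree monomials it is
given by `∇₂(T) = T⊗1 + 1⊗T + T¹⊗T²` if `T = ∨²(T¹.T²)` and `∇₂(T) = T⊗1 + 1⊗T` if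
the root of `T` has arity `≠ 2`; and it is not coassociative. Thus `(K{X}_N, ⧢, ∇₂)`
is a co-magma object in unital commutative algebras. -/
theorem stmt15 (K : Type) [Field K] [CharZero K] (N : ℕ∞) (hN : 2 ≤ N)
    (Δ : FA K ℕ N →ₗ[K] ((OT ℕ N × OT ℕ N) →₀ K))
    (hΔ1 : Δ (Finsupp.single (none : OT ℕ N) 1) =
      Finsupp.single ((none : OT ℕ N), (none : OT ℕ N)) 1)
    (hΔx : ∀ x : ℕ, Δ (Finsupp.single (some (PT.leaf x)) 1) =
      Finsupp.single ((some (PT.leaf x) : OT ℕ N), (none : OT ℕ N)) 1 +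
        Finsupp.single ((none : OT ℕ N), (some (PT.leaf x) : OT ℕ N)) 1)
    (hΔm : ∀ l : List (FA K ℕ N), 2 ≤ l.length → (l.length : ℕ∞) ≤ N →
      Δ (G l) = G2 (l.map (Δ ·)))
    (sh : FA K ℕ N → FA K ℕ N → FA K ℕ N)
    (hsh : ∀ (f g : FA K ℕ N) (t : OT ℕ N),
      sh f g t = (Δ (Finsupp.single t 1)).sum fun p c => c * (f p.1 * g p.2))
    (nab : FA K ℕ N →ₗ[K] ((OT ℕ N × OT ℕ N) →₀ K))
    (hnab : ∀ f₁ f₂ g : FA K ℕ N,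
      pairF (G [f₁, f₂]) g = pair2 (tens f₁ f₂) (nab g)) :
    (nab (Finsupp.single (none : OT ℕ N) 1) =
      Finsupp.single ((none : OT ℕ N), (none : OT ℕ N)) 1) ∧
    (∀ f g : FA K ℕ N, nab (sh f g) = sh2 sh (nab f) (nab g)) ∧
    (∀ (h : 2 ≤ 2) (h' : ((2 : ℕ) : ℕ∞) ≤ N) (f : Fin 2 → PT ℕ N),
      nab (Finsupp.single (some (PT.node 2 h h' f) : OT ℕ N) 1) =
        Finsupp.single ((some (PT.node 2 h h' f) : OT ℕ N), (none : OT ℕ N)) 1 +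
          Finsupp.single ((none : OT ℕ N), (some (PT.node 2 h h' f) : OT ℕ N)) 1 +
            Finsupp.single ((some (f 0) : OT ℕ N), (some (f 1) : OT ℕ N)) 1) ∧
    (∀ x : ℕ, nab (Finsupp.single (some (PT.leaf x) : OT ℕ N) 1) =
      Finsupp.single ((some (PT.leaf x) : OT ℕ N), (none : OT ℕ N)) 1 +
        Finsupp.single ((none : OT ℕ N), (some (PT.leaf x) : OT ℕ N)) 1) ∧
    (∀ (k : ℕ) (h : 2 ≤ k) (h' : (k : ℕ∞) ≤ N) (f : Fin k → PT ℕ N), k ≠ 2 →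
      nab (Finsupp.single (some (PT.node k h h' f) : OT ℕ N) 1) =
        Finsupp.single ((some (PT.node k h h' f) : OT ℕ N), (none : OT ℕ N)) 1 +
          Finsupp.single ((none : OT ℕ N), (some (PT.node k h h' f) : OT ℕ N)) 1) ∧
    ¬ (∀ f : FA K ℕ N, nablaTensorId nab (nab f) = idTensorNabla nab (nab f)) :=
  stmt15_general K N hN Δ hΔm sh hsh nab hnab

end
end
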